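/- (Single-beam optimality with multi-antenna Bob.) Let w ∈ ℂ^N, let H be an M×N complex matrix, let c ∈ ℂ^M with c ≠ 0, and let σ > 0. Then for every N×N complex positive semidefinite Hermitian matrix A with trace A = 1, Re(wᴴ A w) / ( Re(cᴴ (H A Hᴴ) c) + σ·‖c‖² ) ≤ sup over unit vectors v ∈ ℂ^N of |wᴴ v|² / ( |cᴴ H v|² + σ·‖c‖² ). Hence for any fixed linear filter c at Bob, the jammer's optimum over trace-one PSD covariances is achieved in the limit by rank-one matrices: all available power in a single direction. -/

import Mathlib

open Matrix
open scoped ComplexOrder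

/-!
Diagonalise `A = ∑ λᵢ uᵢ uᵢᴴ` with `λᵢ ≥ 0`, `∑ λᵢ = 1` and unit eigenvectors `uᵢ`. Both quadratic
forms become `λ`-weighted sums, and since `∑ λᵢ = 1` the noise term `σ‖c‖²` can be absorbed into
the weighted sum as well. The ratio is then a weighted mediant of the single-beam ratios
`|wᴴuᵢ|² / (|cᴴHuᵢ|² + σ‖c‖²)`, so it is at most the largest of them, hence at most the supremum.
-/

theorem Finset.sum_mul_div_sum_mul_le {ι : Type*} (s : Finset ι) {p a b : ι → ℝ} {R : ℝ}
    (hp : ∀ i ∈ s, 0 ≤ p i) (hb : 0 < ∑ i ∈ s, p i * b i) (h : ∀ i ∈ s, a i ≤ R * b i) :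
    (∑ i ∈ s, p i * a i) / ∑ i ∈ s, p i * b i ≤ R := by
  rw [div_le_iff₀ hb, Finset.mul_sum]
  exact Finset.sum_le_sum fun i hi =>
    (mul_le_mul_of_nonneg_left (h i hi) (hp i hi)).trans_eq (mul_left_comm _ _ _)

section DotProduct

variable {𝕜 m n : Type*} [RCLike 𝕜] [Fintype m] [Fintype n]

theorem norm_star_dotProduct_sq_le (w v : n → 𝕜) :
    ‖star w ⬝ᵥ v‖ ^ 2 ≤ (∑ i, ‖w i‖ ^ 2) * ∑ i, ‖v i‖ ^ 2 := by
  have h := norm_inner_le_norm (𝕜 := 𝕜) (WithLp.toLp 2 w) (WithLp.toLp 2 v)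
  rw [EuclideanSpace.inner_toLp_toLp, dotProduct_comm] at h
  rw [← EuclideanSpace.norm_sq_eq, ← EuclideanSpace.norm_sq_eq, ← mul_pow]
  exact pow_le_pow_left₀ (norm_nonneg _) h 2

theorem star_conjTranspose_mulVec_dotProduct (H : Matrix m n 𝕜) (c : m → 𝕜) (v : n → 𝕜) :
    star (Hᴴ *ᵥ c) ⬝ᵥ v = star c ⬝ᵥ H *ᵥ v := by
  rw [star_mulVec, conjTranspose_conjTranspose, dotProduct_mulVec]

theorem star_dotProduct_mul_mul_conjTranspose_mulVec (H : Matrix m n 𝕜) (A : Matrix n n 𝕜)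
    (c : m → 𝕜) : star c ⬝ᵥ (H * A * Hᴴ) *ᵥ c = star (Hᴴ *ᵥ c) ⬝ᵥ A *ᵥ (Hᴴ *ᵥ c) := by
  rw [← mulVec_mulVec, ← mulVec_mulVec, star_conjTranspose_mulVec_dotProduct]

theorem bddAbove_norm_star_dotProduct_sq_div (w : n → 𝕜) (f : (n → 𝕜) → ℝ)
    (hf : ∀ v, 0 ≤ f v) {s : ℝ} (hs : 0 < s) :
    BddAbove {r : ℝ | ∃ v : n → 𝕜, ∑ i, ‖v i‖ ^ 2 = 1 ∧ r = ‖star w ⬝ᵥ v‖ ^ 2 / (f v + s)} := by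
  refine ⟨(∑ i, ‖w i‖ ^ 2) / s, ?_⟩
  rintro _ ⟨v, hv, rfl⟩
  have h := norm_star_dotProduct_sq_le w v
  rw [hv, mul_one] at h
  exact div_le_div₀ (by positivity) h hs (le_add_of_nonneg_left (hf v))

end DotProduct

namespace Matrix.IsHermitian

variable {𝕜 m n : Type*} [RCLike 𝕜] [Fintype m] [Fintype n] [DecidableEq n] {A : Matrix n n 𝕜}

theorem star_eigenvectorBasis_dotProduct_mulVec (hA : A.IsHermitian) (i : n) (x : n → 𝕜) :
    star ⇑(hA.eigenvectorBasis i) ⬝ᵥ A *ᵥ x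
      = hA.eigenvalues i * (star ⇑(hA.eigenvectorBasis i) ⬝ᵥ x) := by
  have h : star ⇑(hA.eigenvectorBasis i) ᵥ* A = star (A *ᵥ hA.eigenvectorBasis i) := by
    rw [star_mulVec, hA.eq]
  rw [dotProduct_mulVec, h, hA.mulVec_eigenvectorBasis, star_smul,
    RCLike.real_smul_eq_coe_smul (K := 𝕜), smul_dotProduct, smul_eq_mul]
  simp

theorem star_dotProduct_mulVec_eq_sum (hA : A.IsHermitian) (x : n → 𝕜) :
    star x ⬝ᵥ A *ᵥ x
      = ∑ i, (hA.eigenvalues i : 𝕜) * (‖star x ⬝ᵥ ⇑(hA.eigenvectorBasis i)‖ ^ 2 : ℝ) := by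
  have parseval := hA.eigenvectorBasis.sum_inner_mul_inner (WithLp.toLp 2 x)
    (WithLp.toLp 2 (A *ᵥ x))
  simp only [EuclideanSpace.inner_eq_star_dotProduct] at parseval
  rw [dotProduct_comm, ← parseval]
  refine Finset.sum_congr rfl fun i _ => ?_
  rw [dotProduct_comm (A *ᵥ x), star_eigenvectorBasis_dotProduct_mulVec,
    dotProduct_comm _ (star x), star_dotProduct, ← starRingEnd_apply, mul_left_comm,
    RCLike.conj_mul, RCLike.norm_conj, RCLike.ofReal_pow]

theorem re_star_dotProduct_mulVec_eq_sum (hA : A.IsHermitian) (x : n → 𝕜) :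
    RCLike.re (star x ⬝ᵥ A *ᵥ x)
      = ∑ i, hA.eigenvalues i * ‖star x ⬝ᵥ ⇑(hA.eigenvectorBasis i)‖ ^ 2 := by
  simp only [hA.star_dotProduct_mulVec_eq_sum, map_sum, ← RCLike.ofReal_mul, RCLike.ofReal_re]

theorem re_star_dotProduct_mul_mul_conjTranspose_mulVec_eq_sum (hA : A.IsHermitian)
    (H : Matrix m n 𝕜) (c : m → 𝕜) :
    RCLike.re (star c ⬝ᵥ (H * A * Hᴴ) *ᵥ c)
      = ∑ i, hA.eigenvalues i * ‖star c ⬝ᵥ H *ᵥ ⇑(hA.eigenvectorBasis i)‖ ^ 2 := by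
  rw [star_dotProduct_mul_mul_conjTranspose_mulVec, hA.re_star_dotProduct_mulVec_eq_sum]
  simp_rw [star_conjTranspose_mulVec_dotProduct]

theorem sum_norm_eigenvectorBasis_sq (hA : A.IsHermitian) (i : n) :
    ∑ j, ‖hA.eigenvectorBasis i j‖ ^ 2 = 1 := by
  rw [← EuclideanSpace.norm_sq_eq, hA.eigenvectorBasis.norm_eq_one, one_pow]

theorem sum_eigenvalues_eq_one_of_trace_eq_one (hA : A.IsHermitian) (htr : A.trace = 1) :
    ∑ i, hA.eigenvalues i = 1 := by
  rw [hA.trace_eq_sum_eigenvalues] at htr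
  exact_mod_cast htr

end Matrix.IsHermitian

/-- Single-beam optimality with multi-antenna Bob: for any fixed filter `c`, the
post-filtering SNR ratio at any trace-one PSD covariance is bounded by the supremum
of the rank-one (single direction) ratios. -/
theorem stmt_7 (N M : ℕ) (w : Fin N → ℂ) (H : Matrix (Fin M) (Fin N) ℂ)
    (c : Fin M → ℂ) (hc : c ≠ 0) (σ : ℝ) (hσ : 0 < σ)
    (A : Matrix (Fin N) (Fin N) ℂ) (hA : A.PosSemidef) (htr : A.trace = 1) :
    (star w ⬝ᵥ A.mulVec w).re /
        ((star c ⬝ᵥ (H * A * Hᴴ).mulVec c).re + σ * ∑ i, ‖c i‖ ^ 2)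
      ≤ sSup { r : ℝ | ∃ v : Fin N → ℂ, (∑ i, ‖v i‖ ^ 2) = 1 ∧
          r = ‖star w ⬝ᵥ v‖ ^ 2 /
              (‖star c ⬝ᵥ H.mulVec v‖ ^ 2 + σ * ∑ i, ‖c i‖ ^ 2) } := by
  have hc2 : 0 < ∑ i, ‖c i‖ ^ 2 := by
    rw [← EuclideanSpace.norm_sq_eq]
    exact pow_pos (norm_pos_iff.2 fun h => hc (congrArg WithLp.ofLp h)) 2
  set s := σ * ∑ i, ‖c i‖ ^ 2
  have hs : 0 < s := mul_pos hσ hc2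
  have hbdd := bddAbove_norm_star_dotProduct_sq_div w (fun v => ‖star c ⬝ᵥ H *ᵥ v‖ ^ 2)
    (fun _ => sq_nonneg _) hs
  have hp1 := hA.1.sum_eigenvalues_eq_one_of_trace_eq_one htr
  have hden : ∀ b : Fin N → ℝ, ∑ i, hA.1.eigenvalues i * b i + s
      = ∑ i, hA.1.eigenvalues i * (b i + s) := fun b => by
    simp only [mul_add, Finset.sum_add_distrib, ← Finset.sum_mul, hp1, one_mul]
  rw [← RCLike.re_to_complex, ← RCLike.re_to_complex, hA.1.re_star_dotProduct_mulVec_eq_sum,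
    hA.1.re_star_dotProduct_mul_mul_conjTranspose_mulVec_eq_sum, hden]
  refine Finset.sum_mul_div_sum_mul_le _ (fun i _ => hA.eigenvalues_nonneg i) ?_ fun i _ => ?_
  · rw [← hden]
    exact add_pos_of_nonneg_of_pos
      (Finset.sum_nonneg fun i _ => mul_nonneg (hA.eigenvalues_nonneg i) (sq_nonneg _)) hs
  · rw [← div_le_iff₀ (add_pos_of_nonneg_of_pos (sq_nonneg _) hs)]
    exact le_csSup hbdd ⟨_, hA.1.sum_norm_eigenvectorBasis_sq i, rfl⟩
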